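/- arXiv:1712.04677 — 2 statements merged into one kernel-verified Lean document; each statement's English description precedes it below -/
import Mathlib

section
/- Suppose the primal problem defining Jₙ is feasible and let y*ₙ be an optimizer of the dual problem J̃ₙ. Then 0 ≤ Jₙ − J ≤ y*ₙ(A rₙ) − c₀(rₙ). If, in addition, there exists γ > 0 such that ‖(y(b₁),…,y(bₙ))‖_{R*} ≥ γ‖y‖_* for every y ∈ 𝕂* and γθ_P > ‖b‖, then 0 ≤ Jₙ − J ≤ (‖c₀‖ + θ_D‖A‖)·‖rₙ‖, where θ_D := 2θ_P‖c‖_{R*} / (γθ_P − ‖b‖) and ‖A‖ is the operator norm of A. -/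
/-!
The lower bound `J ≤ Jₙ` holds because every point of the ball `Bₙ` feasible for the finite
problem is feasible for the infinite one. For the upper bound, the Lagrangian
`L(α, y) = αᵀc - y(∑ αᵢ bᵢ - b)` is bilinear, the `R`-ball is compact and convex, and separating
a point from the closed convex set `{(αᵀc + s, ∑ αᵢ bᵢ - k) : ‖α‖_R ≤ θ_P, s ≥ 0, k ∈ 𝕂}` shows
that there is no duality gap, so `Jₙ ≤ J̃ₙ ≤ L(α, y*ₙ)` for every `α` in the ball. Taking `α` with
`Π_{B_n}(x*) = ∑ αᵢ xᵢ` and adding `y*ₙ(A x* - b) ≥ 0` gives `Jₙ - J ≤ y*ₙ(A rₙ) - c₀(rₙ)`.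
Comparing the dual objective at `y*ₙ` with its value at `y = 0` bounds `‖y*ₙ‖` by `θ_D`, which
gives the second estimate.
-/

/-- The dual norm on `ℝⁿ` induced by a norm `R` and the standard bilinear pairing. -/
noncomputable def dualNormR {n : ℕ} (R : (Fin n → ℝ) → ℝ) (z : Fin n → ℝ) : ℝ :=
  sSup {t | ∃ α : Fin n → ℝ, R α ≤ 1 ∧ t = ∑ i, α i * z i}

open Set Pointwise

namespace Seminorm

variable {E : Type*} [NormedAddCommGroup E] [NormedSpace ℝ E] [FiniteDimensional ℝ E]
  (p : Seminorm ℝ E)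

theorem continuous_of_finiteDimensional : Continuous p :=
  p.convexOn.locallyLipschitz.continuous

theorem exists_pos_mul_norm_le (hp : ∀ x, p x = 0 → x = 0) :
    ∃ m > 0, ∀ x, m * ‖x‖ ≤ p x := by
  rcases subsingleton_or_nontrivial E with hE | hE
  · exact ⟨1, one_pos, fun x => by simp [Subsingleton.elim x 0]⟩
  obtain ⟨x₀, hx₀, hmin⟩ := (isCompact_sphere (0 : E) 1).exists_isMinOn
    (NormedSpace.sphere_nonempty.2 zero_le_one) p.continuous_of_finiteDimensional.continuousOn
  have hx₀1 : ‖x₀‖ = 1 := by simpa using hx₀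
  have hm : 0 < p x₀ := (apply_nonneg p x₀).lt_of_ne fun h => by
    simp [hp x₀ h.symm] at hx₀1
  refine ⟨p x₀, hm, fun x => ?_⟩
  rcases eq_or_ne x 0 with rfl | hx
  · simp
  have hxn : 0 < ‖x‖ := norm_pos_iff.2 hx
  have hle : p x₀ ≤ p (‖x‖⁻¹ • x) := hmin (by simp [norm_smul, hxn.ne'])
  rw [map_smul_eq_mul, norm_inv, norm_norm, inv_mul_eq_div, le_div_iff₀ hxn] at hle
  exact hle

theorem isCompact_closedBall_zero (hp : ∀ x, p x = 0 → x = 0) (r : ℝ) :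
    IsCompact (p.closedBall 0 r) := by
  obtain ⟨m, hm, hpm⟩ := p.exists_pos_mul_norm_le hp
  refine Metric.isCompact_of_isClosed_isBounded ?_ ?_
  · rw [closedBall_zero_eq]
    exact isClosed_le p.continuous_of_finiteDimensional continuous_const
  · refine (Metric.isBounded_closedBall (x := (0 : E)) (r := r / m)).subset fun x hx => ?_
    rw [mem_closedBall_zero] at hx
    rw [Metric.mem_closedBall, dist_zero_right, le_div_iff₀ hm, mul_comm]
    exact (hpm x).trans hx

end Seminorm

section DualNorm

variable {n : ℕ} {p : Seminorm ℝ (Fin n → ℝ)}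

theorem le_dualNormR (hp : ∀ α, p α = 0 → α = 0) {α : Fin n → ℝ} (hα : p α ≤ 1)
    (z : Fin n → ℝ) : ∑ i, α i * z i ≤ dualNormR p z := by
  refine le_csSup ?_ ⟨α, hα, rfl⟩
  have hcont : Continuous fun β : Fin n → ℝ => ∑ i, β i * z i := by fun_prop
  refine ((p.isCompact_closedBall_zero hp 1).image hcont).bddAbove.mono ?_
  rintro _ ⟨β, hβ, rfl⟩
  exact ⟨β, p.mem_closedBall_zero.2 hβ, rfl⟩

theorem dualNormR_le {z : Fin n → ℝ} {t : ℝ}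
    (h : ∀ α : Fin n → ℝ, p α ≤ 1 → ∑ i, α i * z i ≤ t) : dualNormR p z ≤ t :=
  csSup_le ⟨0, 0, by simp, by simp⟩ fun _ ⟨α, hα, hs⟩ => hs ▸ h α hα

theorem sum_mul_le_mul_dualNormR (hp : ∀ α, p α = 0 → α = 0) {θ : ℝ} (hθ : 0 < θ)
    {α : Fin n → ℝ} (hα : p α ≤ θ) (z : Fin n → ℝ) :
    ∑ i, α i * z i ≤ θ * dualNormR p z := by
  have hα' : p (θ⁻¹ • α) ≤ 1 := by
    rw [map_smul_eq_mul, Real.norm_eq_abs, abs_inv, abs_of_pos hθ, inv_mul_le_iff₀ hθ, mul_one]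
    exact hα
  have := le_dualNormR hp hα' z
  simp only [Pi.smul_apply, smul_eq_mul, mul_assoc, ← Finset.mul_sum] at this
  rwa [inv_mul_le_iff₀ hθ] at this

theorem mul_dualNormR_le {θ : ℝ} (hθ : 0 < θ) {z : Fin n → ℝ} {t : ℝ}
    (h : ∀ α : Fin n → ℝ, p α ≤ θ → ∑ i, α i * z i ≤ t) : θ * dualNormR p z ≤ t := by
  rw [← le_div_iff₀' hθ]
  refine dualNormR_le fun α hα => ?_
  have := h (θ • α) (by
    rw [map_smul_eq_mul, Real.norm_eq_abs, abs_of_pos hθ]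
    exact mul_le_of_le_one_right hθ.le hα)
  simp only [Pi.smul_apply, smul_eq_mul, mul_assoc, ← Finset.mul_sum] at this
  rwa [le_div_iff₀' hθ]

theorem dualNormR_neg (hp : ∀ α, p α = 0 → α = 0) (z : Fin n → ℝ) :
    dualNormR p (-z) = dualNormR p z := by
  have key : ∀ w : Fin n → ℝ, dualNormR p (-w) ≤ dualNormR p w := fun w =>
    dualNormR_le fun α hα => by
      have := le_dualNormR hp (α := -α) (by rwa [map_neg_eq_map]) w
      simpa using this
  exact le_antisymm (key z) (by simpa using key (-z))

theorem dualNormR_add_le (hp : ∀ α, p α = 0 → α = 0) (z w : Fin n → ℝ) :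
    dualNormR p (z + w) ≤ dualNormR p z + dualNormR p w :=
  dualNormR_le fun α hα => by
    simp only [Pi.add_apply, mul_add, Finset.sum_add_distrib]
    exact add_le_add (le_dualNormR hp hα z) (le_dualNormR hp hα w)

end DualNorm

theorem nonneg_of_forall_lt_add_mul {u a b : ℝ} (h : ∀ s : ℝ, 0 ≤ s → u < a + s * b) :
    0 ≤ b := by
  by_contra! hb
  have hua : u < a := by simpa using h 0 le_rfl
  have := h ((a - u) / -b) (div_nonneg (by linarith) (by linarith))
  rw [div_mul_eq_mul_div, div_neg, mul_div_assoc, div_self hb.ne, mul_one] at this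
  linarith

theorem exists_lagrange_multiplier_of_isCompact
    {E B : Type*} [NormedAddCommGroup E] [NormedSpace ℝ E]
    [NormedAddCommGroup B] [NormedSpace ℝ B]
    {S : Set E} (hS : IsCompact S) (hSc : Convex ℝ S)
    {K : Set B} (hK : IsClosed K) (hKc : Convex ℝ K)
    (hKcone : ∀ t : ℝ, 0 ≤ t → ∀ v ∈ K, t • v ∈ K)
    (f : E →L[ℝ] ℝ) (L : E →L[ℝ] B) (b : B) {t : ℝ}
    (hfeas : ∃ α ∈ S, L α - b ∈ K) (ht : ∀ α ∈ S, L α - b ∈ K → t < f α) :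
    ∃ y : B →L[ℝ] ℝ, (∀ v ∈ K, 0 ≤ y v) ∧ ∀ α ∈ S, t < f α - y (L α - b) := by
  obtain ⟨α₀, hα₀, hα₀K⟩ := hfeas
  have hK0 : (0 : B) ∈ K := by simpa using hKcone 0 le_rfl _ hα₀K
  set C : Set (ℝ × B) := (f.prod L) '' S + Ici 0 ×ˢ (-K)
  have hCclosed : IsClosed C :=
    (isClosed_Ici.prod hK.neg).add_left_of_isCompact (hS.image (f.prod L).continuous)
  have hCconvex : Convex ℝ C :=
    (hSc.linear_image (f.prod L).toLinearMap).add ((convex_Ici 0).prod hKc.neg)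
  have hnot : (t, b) ∉ C := by
    rintro ⟨_, ⟨α, hα, rfl⟩, ⟨s, k⟩, ⟨hs, hk⟩, heq⟩
    simp only [ContinuousLinearMap.prod_apply, Prod.mk_add_mk, Prod.mk.injEq] at heq
    have hαK : L α - b ∈ K := by rwa [← heq.2, sub_add_cancel_left]
    linarith [ht α hα hαK, heq.1, mem_Ici.1 hs]
  obtain ⟨φ, u, hφ, hφC⟩ := geometric_hahn_banach_point_closed hCconvex hCclosed hnot
  set lam := φ (1, 0)
  set y₀ := φ.comp (ContinuousLinearMap.inr ℝ ℝ B)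
  have hφ_apply : ∀ r v, φ (r, v) = r * lam + y₀ v := fun r v => by
    have : ((r, v) : ℝ × B) = r • ((1 : ℝ), (0 : B)) + (0, v) := by simp
    rw [this, map_add, map_smul, smul_eq_mul]
    rfl
  have hmem : ∀ α ∈ S, ∀ s, 0 ≤ s → ∀ k ∈ K, u < (f α + s) * lam + y₀ (L α - k) := by
    intro α hα s hs k hk
    have := hφC _ ⟨_, ⟨α, hα, rfl⟩, (s, -k), ⟨hs, by simpa using hk⟩, rfl⟩
    simpa [hφ_apply, sub_eq_add_neg] using this
  rw [hφ_apply] at hφ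
  have hlam : 0 ≤ lam := by
    refine nonneg_of_forall_lt_add_mul (u := u) (a := f α₀ * lam + y₀ (L α₀)) fun s hs => ?_
    have := hmem α₀ hα₀ s hs 0 hK0
    rw [add_mul, sub_zero] at this
    linarith
  have hy₀ : ∀ k ∈ K, 0 ≤ -y₀ k := fun k hk => by
    refine nonneg_of_forall_lt_add_mul (u := u) (a := f α₀ * lam + y₀ (L α₀)) fun s hs => ?_
    have := hmem α₀ hα₀ 0 le_rfl (s • k) (hKcone s hs k hk)
    simp only [map_sub, map_smul, smul_eq_mul] at this
    linarith
  -- With `lam = 0`, `φ` would take the same value at `(t, b)` and at the point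
  -- `(f α₀, L α₀ - (L α₀ - b))` of `C`.
  have hlam_pos : 0 < lam := hlam.lt_of_ne fun h => by
    have := hmem α₀ hα₀ 0 le_rfl _ hα₀K
    rw [← h, sub_sub_cancel] at this
    rw [← h] at hφ
    linarith
  refine ⟨lam⁻¹ • -y₀, fun v hv => ?_, fun α hα => ?_⟩
  · exact mul_nonneg (inv_nonneg.2 hlam) (hy₀ v hv)
  · have := hmem α hα 0 le_rfl 0 hK0
    simp only [add_zero, sub_zero] at this
    have key : t * lam < (f α - (lam⁻¹ • -y₀) (L α - b)) * lam := by
      simp only [FunLike.coe_smul, Pi.smul_apply, neg_apply, map_sub, smul_eq_mul]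
      field_simp
      linarith
    exact lt_of_mul_lt_mul_right key hlam

section SemiInfiniteLP

variable {B : Type*} [NormedAddCommGroup B] [NormedSpace ℝ B] {n : ℕ}
  (K : Set B) (b : B) (bv : Fin n → B) (c : Fin n → ℝ) (p : Seminorm ℝ (Fin n → ℝ)) (θ : ℝ)

noncomputable def primalValue : ℝ :=
  sInf {t | ∃ α : Fin n → ℝ, p α ≤ θ ∧ (∑ i, α i • bv i) - b ∈ K ∧ t = ∑ i, α i * c i}

noncomputable def dualObjective (y : B →L[ℝ] ℝ) : ℝ :=
  y b - θ * dualNormR p (fun i => y (bv i) - c i)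

noncomputable def dualValue : ℝ :=
  sSup {t | ∃ y : B →L[ℝ] ℝ, (∀ v ∈ K, 0 ≤ y v) ∧ t = dualObjective b bv c p θ y}

variable {K b bv c p θ}

theorem dualObjective_le_lagrangian (hp : ∀ α, p α = 0 → α = 0) (hθ : 0 < θ)
    (y : B →L[ℝ] ℝ) {α : Fin n → ℝ} (hα : p α ≤ θ) :
    dualObjective b bv c p θ y ≤ ∑ i, α i * c i - y ((∑ i, α i • bv i) - b) := by
  have := sum_mul_le_mul_dualNormR hp hθ hα (fun i => y (bv i) - c i)
  simp only [mul_sub, Finset.sum_sub_distrib] at this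
  simp only [dualObjective, map_sub, map_sum, map_smul, smul_eq_mul]
  linarith

theorem dualObjective_le_of_feasible (hp : ∀ α, p α = 0 → α = 0) (hθ : 0 < θ)
    {y : B →L[ℝ] ℝ} (hy : ∀ v ∈ K, 0 ≤ y v) {α : Fin n → ℝ} (hα : p α ≤ θ)
    (hαK : (∑ i, α i • bv i) - b ∈ K) :
    dualObjective b bv c p θ y ≤ ∑ i, α i * c i := by
  linarith [dualObjective_le_lagrangian (b := b) (bv := bv) (c := c) hp hθ y hα, hy _ hαK]

theorem primalValue_le_of_feasible (hp : ∀ α, p α = 0 → α = 0) (hθ : 0 < θ)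
    {α : Fin n → ℝ} (hα : p α ≤ θ) (hαK : (∑ i, α i • bv i) - b ∈ K) :
    primalValue K b bv c p θ ≤ ∑ i, α i * c i := by
  refine csInf_le ⟨dualObjective b bv c p θ 0, ?_⟩ ⟨α, hα, hαK, rfl⟩
  rintro _ ⟨α', hα', hα'K, rfl⟩
  exact dualObjective_le_of_feasible hp hθ (fun _ _ => le_rfl) hα' hα'K

theorem dualObjective_le_dualValue (hp : ∀ α, p α = 0 → α = 0) (hθ : 0 < θ)
    (hfeas : ∃ α : Fin n → ℝ, p α ≤ θ ∧ (∑ i, α i • bv i) - b ∈ K)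
    {y : B →L[ℝ] ℝ} (hy : ∀ v ∈ K, 0 ≤ y v) :
    dualObjective b bv c p θ y ≤ dualValue K b bv c p θ := by
  obtain ⟨α, hα, hαK⟩ := hfeas
  refine le_csSup ⟨∑ i, α i * c i, ?_⟩ ⟨y, hy, rfl⟩
  rintro _ ⟨y', hy', rfl⟩
  exact dualObjective_le_of_feasible hp hθ hy' hα hαK

theorem primalValue_le_dualValue (hK : IsClosed K) (hKc : Convex ℝ K)
    (hKcone : ∀ t : ℝ, 0 ≤ t → ∀ v ∈ K, t • v ∈ K) (hp : ∀ α, p α = 0 → α = 0) (hθ : 0 < θ)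
    (hfeas : ∃ α : Fin n → ℝ, p α ≤ θ ∧ (∑ i, α i • bv i) - b ∈ K) :
    primalValue K b bv c p θ ≤ dualValue K b bv c p θ := by
  refine le_of_forall_lt_imp_le_of_dense fun t ht => ?_
  have hlt : ∀ α : Fin n → ℝ, p α ≤ θ → (∑ i, α i • bv i) - b ∈ K → t < ∑ i, α i * c i :=
    fun α hα hαK => ht.trans_le (primalValue_le_of_feasible hp hθ hα hαK)
  set f := ∑ i, (ContinuousLinearMap.proj i : (Fin n → ℝ) →L[ℝ] ℝ).smulRight (c i)
  set L := ∑ i, (ContinuousLinearMap.proj i : (Fin n → ℝ) →L[ℝ] ℝ).smulRight (bv i)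
  have hf : ∀ α, f α = ∑ i, α i * c i := by simp [f]
  have hL : ∀ α, L α = ∑ i, α i • bv i := by simp [L]
  obtain ⟨y, hy, hyt⟩ := exists_lagrange_multiplier_of_isCompact
    (p.isCompact_closedBall_zero hp θ) (p.convex_closedBall 0 θ) hK hKc hKcone f L b
    (t := t) (by simpa [hL] using hfeas) (by simpa [hf, hL] using hlt)
  refine le_trans ?_ (dualObjective_le_dualValue hp hθ hfeas hy)
  have : θ * dualNormR p (fun i => y (bv i) - c i) ≤ y b - t := mul_dualNormR_le hθ fun α hα => by
    have := hyt α (p.mem_closedBall_zero.2 hα)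
    simp only [hf, hL, map_sub, map_sum, map_smul, smul_eq_mul] at this
    simp only [mul_sub, Finset.sum_sub_distrib]
    linarith
  simp only [dualObjective]
  linarith

theorem norm_le_of_dualObjective_zero_le (hp : ∀ α, p α = 0 → α = 0) (hθ : 0 < θ)
    {y : B →L[ℝ] ℝ} {γ : ℝ} (hγ : γ * ‖y‖ ≤ dualNormR p (fun i => y (bv i)))
    (hb : ‖b‖ < γ * θ) (hy : dualObjective b bv c p θ 0 ≤ dualObjective b bv c p θ y) :
    ‖y‖ ≤ 2 * θ * dualNormR p c / (γ * θ - ‖b‖) := by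
  have hzero : dualObjective b bv c p θ 0 = -(θ * dualNormR p c) := by
    simp only [dualObjective, zero_apply, zero_sub]
    rw [← Pi.neg_def, dualNormR_neg hp]
  have htri : dualNormR p (fun i => y (bv i)) ≤
      dualNormR p (fun i => y (bv i) - c i) + dualNormR p c := by
    convert dualNormR_add_le hp (fun i => y (bv i) - c i) c using 2
    exact funext fun i => (sub_add_cancel _ _).symm
  have hyb : y b ≤ ‖y‖ * ‖b‖ := (le_abs_self _).trans (y.le_opNorm b)
  have hγθ := mul_le_mul_of_nonneg_left (hγ.trans htri) hθ.le
  rw [hzero] at hy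
  simp only [dualObjective] at hy
  rw [le_div_iff₀ (by linarith)]
  linarith

end SemiInfiniteLP

theorem apply_comp_sub_le_of_norm_le {X B : Type*} [NormedAddCommGroup X] [NormedSpace ℝ X]
    [NormedAddCommGroup B] [NormedSpace ℝ B] (c₀ : X →L[ℝ] ℝ) (A : X →L[ℝ] B)
    {y : B →L[ℝ] ℝ} {M : ℝ} (hy : ‖y‖ ≤ M) (r : X) :
    y (A r) - c₀ r ≤ (‖c₀‖ + M * ‖A‖) * ‖r‖ := by
  have hyA : y (A r) ≤ M * (‖A‖ * ‖r‖) :=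
    (le_abs_self _).trans <| (y.le_of_opNorm_le hy _).trans <|
      mul_le_mul_of_nonneg_left (A.le_opNorm r) ((norm_nonneg y).trans hy)
  have hc : -c₀ r ≤ ‖c₀‖ * ‖r‖ := (neg_le_abs _).trans (c₀.le_opNorm r)
  linarith

theorem stmt1_general
    {X : Type*} [NormedAddCommGroup X] [NormedSpace ℝ X]
    {B : Type*} [NormedAddCommGroup B] [NormedSpace ℝ B]
    (c0 : X →L[ℝ] ℝ) (A : X →L[ℝ] B)
    (K : Set B) (hKclosed : IsClosed K) (hKconvex : Convex ℝ K)
    (hKcone : ∀ t : ℝ, 0 ≤ t → ∀ v ∈ K, t • v ∈ K)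
    (b0 : B)
    -- the infinite LP attains a minimizer x*
    (xstar : X) (hxfeas : A xstar - b0 ∈ K)
    (hxmin : ∀ x : X, A x - b0 ∈ K → c0 xstar ≤ c0 x)
    (J : ℝ) (hJ : J = c0 xstar)
    {n : ℕ} (x : Fin n → X)
    -- a norm on ℝⁿ
    (R : (Fin n → ℝ) → ℝ)
    (hRtri : ∀ α β, R (α + β) ≤ R α + R β)
    (hRsmul : ∀ (a : ℝ) (α), R (a • α) = |a| * R α)
    (hRdef : ∀ α, R α = 0 → α = 0)
    (θP : ℝ) (hθP : 0 < θP)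
    -- semi-infinite primal and dual values
    (Jn Jtn : ℝ)
    (hJn : Jn = sInf {t | ∃ α : Fin n → ℝ,
      R α ≤ θP ∧ (∑ i, α i • A (x i)) - b0 ∈ K ∧ t = ∑ i, α i * c0 (x i)})
    (hJtn : Jtn = sSup {t | ∃ y : B →L[ℝ] ℝ, (∀ v ∈ K, 0 ≤ y v) ∧
      t = y b0 - θP * dualNormR R (fun i => y (A (x i)) - c0 (x i))})
    -- feasibility of the semi-infinite primal
    (hfeas : ∃ α : Fin n → ℝ, R α ≤ θP ∧ (∑ i, α i • A (x i)) - b0 ∈ K)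
    -- projection of x* onto the ball B_n and its residual
    (px : X) (hpxmem : ∃ α : Fin n → ℝ, R α ≤ θP ∧ px = ∑ i, α i • x i)
    (rn : X) (hrn : rn = xstar - px)
    -- an optimizer of the dual problem
    (ystar : B →L[ℝ] ℝ) (hystarK : ∀ v ∈ K, 0 ≤ ystar v)
    (hystaropt : ystar b0 - θP * dualNormR R (fun i => ystar (A (x i)) - c0 (x i)) = Jtn) :
    (0 ≤ Jn - J ∧ Jn - J ≤ ystar (A rn) - c0 rn) ∧
      ∀ γ : ℝ, 0 < γ →
        (∀ y : B →L[ℝ] ℝ, (∀ v ∈ K, 0 ≤ y v) →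
          γ * ‖y‖ ≤ dualNormR R (fun i => y (A (x i)))) →
        ‖b0‖ < γ * θP →
        Jn - J ≤
          (‖c0‖ +
            (2 * θP * dualNormR R (fun i => c0 (x i)) / (γ * θP - ‖b0‖)) * ‖A‖) * ‖rn‖ := by
  obtain ⟨p, rfl⟩ : ∃ p : Seminorm ℝ (Fin n → ℝ), ⇑p = R :=
    ⟨Seminorm.of R hRtri (by simpa using hRsmul), rfl⟩
  have hc0 : ∀ α : Fin n → ℝ, ∑ i, α i * c0 (x i) = c0 (∑ i, α i • x i) := by simp
  have hA : ∀ α : Fin n → ℝ, ∑ i, α i • A (x i) = A (∑ i, α i • x i) := by simp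
  have hJ_le : J ≤ Jn := by
    obtain ⟨α₀, hα₀, hα₀K⟩ := hfeas
    rw [hJn, hJ]
    refine le_csInf ⟨_, α₀, hα₀, hα₀K, rfl⟩ ?_
    rintro _ ⟨α, -, hαK, rfl⟩
    rw [hc0]
    exact hxmin _ (hA α ▸ hαK)
  have hV : dualObjective b0 (fun i => A (x i)) (fun i => c0 (x i)) p θP ystar =
      dualValue K b0 (fun i => A (x i)) (fun i => c0 (x i)) p θP :=
    hystaropt.trans hJtn
  have hJn_le : Jn ≤ dualObjective b0 (fun i => A (x i)) (fun i => c0 (x i)) p θP ystar :=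
    hV ▸ hJn ▸ primalValue_le_dualValue hKclosed hKconvex hKcone hRdef hθP hfeas
  have hgap : Jn - J ≤ ystar (A rn) - c0 rn := by
    obtain ⟨α, hα, rfl⟩ := hpxmem
    have hlag := dualObjective_le_lagrangian (b := b0) (bv := fun i => A (x i))
      (c := fun i => c0 (x i)) hRdef hθP ystar hα
    have := hystarK _ hxfeas
    simp only [hc0, hA, hrn, hJ, map_sub] at this hlag ⊢
    linarith
  refine ⟨⟨by linarith, hgap⟩, fun γ _ hγ hb => hgap.trans ?_⟩
  have hopt : dualObjective b0 (fun i => A (x i)) (fun i => c0 (x i)) p θP 0 ≤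
      dualObjective b0 (fun i => A (x i)) (fun i => c0 (x i)) p θP ystar :=
    hV ▸ dualObjective_le_dualValue hRdef hθP hfeas fun _ _ => le_rfl
  exact apply_comp_sub_le_of_norm_le c0 A
    (norm_le_of_dualObjective_zero_le hRdef hθP (hγ ystar hystarK) hb hopt) rn

theorem stmt1
    {X : Type*} [NormedAddCommGroup X] [NormedSpace ℝ X]
    {B : Type*} [NormedAddCommGroup B] [NormedSpace ℝ B]
    (c0 : X →L[ℝ] ℝ) (A : X →L[ℝ] B)
    (K : Set B) (hKclosed : IsClosed K) (hKconvex : Convex ℝ K)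
    (hKcone : ∀ t : ℝ, 0 ≤ t → ∀ v ∈ K, t • v ∈ K)
    (b0 : B)
    -- the infinite LP attains a minimizer x*
    (xstar : X) (hxfeas : A xstar - b0 ∈ K)
    (hxmin : ∀ x : X, A x - b0 ∈ K → c0 xstar ≤ c0 x)
    (J : ℝ) (hJ : J = c0 xstar)
    -- linearly independent normalized elements
    {n : ℕ} (x : Fin n → X) (hli : LinearIndependent ℝ x) (hnorm : ∀ i, ‖x i‖ = 1)
    -- a norm on ℝⁿ
    (R : (Fin n → ℝ) → ℝ)
    (hRtri : ∀ α β, R (α + β) ≤ R α + R β)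
    (hRsmul : ∀ (a : ℝ) (α), R (a • α) = |a| * R α)
    (hRdef : ∀ α, R α = 0 → α = 0)
    (θP : ℝ) (hθP : 0 < θP)
    -- semi-infinite primal and dual values
    (Jn Jtn : ℝ)
    (hJn : Jn = sInf {t | ∃ α : Fin n → ℝ,
      R α ≤ θP ∧ (∑ i, α i • A (x i)) - b0 ∈ K ∧ t = ∑ i, α i * c0 (x i)})
    (hJtn : Jtn = sSup {t | ∃ y : B →L[ℝ] ℝ, (∀ v ∈ K, 0 ≤ y v) ∧
      t = y b0 - θP * dualNormR R (fun i => y (A (x i)) - c0 (x i))})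
    -- feasibility of the semi-infinite primal
    (hfeas : ∃ α : Fin n → ℝ, R α ≤ θP ∧ (∑ i, α i • A (x i)) - b0 ∈ K)
    -- projection of x* onto the ball B_n and its residual
    (px : X) (hpxmem : ∃ α : Fin n → ℝ, R α ≤ θP ∧ px = ∑ i, α i • x i)
    (hpxmin : ∀ v : X, (∃ α : Fin n → ℝ, R α ≤ θP ∧ v = ∑ i, α i • x i) →
      ‖xstar - px‖ ≤ ‖xstar - v‖)
    (rn : X) (hrn : rn = xstar - px)
    -- an optimizer of the dual problem
    (ystar : B →L[ℝ] ℝ) (hystarK : ∀ v ∈ K, 0 ≤ ystar v)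
    (hystaropt : ystar b0 - θP * dualNormR R (fun i => ystar (A (x i)) - c0 (x i)) = Jtn) :
    (0 ≤ Jn - J ∧ Jn - J ≤ ystar (A rn) - c0 rn) ∧
      ∀ γ : ℝ, 0 < γ →
        (∀ y : B →L[ℝ] ℝ, (∀ v ∈ K, 0 ≤ y v) →
          γ * ‖y‖ ≤ dualNormR R (fun i => y (A (x i)))) →
        ‖b0‖ < γ * θP →
        Jn - J ≤
          (‖c0‖ +
            (2 * θP * dualNormR R (fun i => c0 (x i)) / (γ * θP - ‖b0‖)) * ‖A‖) * ‖rn‖ :=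
  stmt1_general c0 A K hKclosed hKconvex hKcone b0 xstar hxfeas hxmin J hJ x R hRtri hRsmul hRdef θP
    hθP Jn Jtn hJn hJtn hfeas px hpxmem rn hrn ystar hystarK hystaropt
end

section
/- Assume γ := min_{i,j} W_{ij} > 0 and that {p ∈ Δ_N : sᵀp = S} is nonempty. Then inf_{λ ∈ ℝ^M} ( G(λ) + F(λ) ) = inf{ G(λ) + F(λ) : λ ∈ ℝ^M, ‖λ‖₂ ≤ M·max{ log(1/γ), 1/ln 2 } }; i.e., the unconstrained dual problem is equivalent to its restriction to the Euclidean ball of radius M·(log(1/γ) ∨ 1/ln 2). -/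
/-!
Adding a constant `c` to `λ` lowers `G` by `c` and raises `F = log₂ ∑ 2^{-λ_j}` by `c`, so we may
assume `min λ = 0`. Capping `λ` at `T = log₂ (1/γ)` then lowers `G` by at least `γ D`, where `D` is
the total amount cut off, because every output probability `(Wᵀp)_j` is at least `γ`; and it raises
`F` by at most `γ D`, by the tangent line of `2^{-x}` at `T` (where `2^{-T} = γ`) together with
`∑ 2^{-λ_j} ≥ 1`. The capped vector has entries in `[0, T]`, hence Euclidean norm at most `√M T`.
-/

noncomputable def entropy2 {M : ℕ} (q : Fin M → ℝ) : ℝ :=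
  ∑ j, -(q j * Real.logb 2 (q j))

open Real Finset Matrix

lemma Real.negMulLog_add_mul_log_le {q w : ℝ} (hq : 0 ≤ q) (hw : 0 < w) :
    negMulLog q + q * log w ≤ w - q := by
  have h := negMulLog_mul (q / w) w
  rw [div_mul_cancel₀ q hw.ne'] at h
  calc negMulLog q + q * log w = w * negMulLog (q / w) := by
        rw [h, show negMulLog w = -(w * log w) by simp [negMulLog]]; field_simp; ring
    _ ≤ w * (1 - q / w) :=
        mul_le_mul_of_nonneg_left (negMulLog_le_one_sub_self (by positivity)) hw.le
    _ = w - q := by field_simp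

lemma sum_negMulLog_add_mul_log_le {ι : Type*} [Fintype ι] {q w : ι → ℝ}
    (hq : q ∈ stdSimplex ℝ ι) (hw : w ∈ stdSimplex ℝ ι) (hw₀ : ∀ j, 0 < w j) :
    ∑ j, (negMulLog (q j) + q j * log (w j)) ≤ 0 :=
  calc ∑ j, (negMulLog (q j) + q j * log (w j)) ≤ ∑ j, (w j - q j) :=
        sum_le_sum fun j _ => negMulLog_add_mul_log_le (hq.1 j) (hw₀ j)
    _ = 0 := by rw [sum_sub_distrib, hw.2, hq.2, sub_self]

lemma entropy2_eq_sum_negMulLog {M : ℕ} (q : Fin M → ℝ) :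
    entropy2 q = (∑ j, negMulLog (q j)) / log 2 := by
  simp only [entropy2, logb, negMulLog, sum_div]
  exact sum_congr rfl fun j _ => by ring

noncomputable def logSumExp2 {ι : Type*} [Fintype ι] (ν : ι → ℝ) : ℝ :=
  logb 2 (∑ j, (2 : ℝ) ^ (-ν j))

lemma isGreatest_entropy2_sub {M : ℕ} [Nonempty (Fin M)] (ν : Fin M → ℝ) :
    IsGreatest {t | ∃ q ∈ stdSimplex ℝ (Fin M), t = entropy2 q - ∑ j, ν j * q j}
      (logSumExp2 ν) := by
  set Z := ∑ j, (2 : ℝ) ^ (-ν j) with hZ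
  have hZ₀ : 0 < Z := sum_pos (fun j _ => by positivity) univ_nonempty
  set gibbs : Fin M → ℝ := fun j => (2 : ℝ) ^ (-ν j) / Z
  have hgibbs : gibbs ∈ stdSimplex ℝ (Fin M) :=
    ⟨fun j => by positivity, by rw [← sum_div, div_self hZ₀.ne']⟩
  have hlog : ∀ j, log (gibbs j) = -(ν j * log 2) - log Z := fun j => by
    rw [log_div (by positivity) hZ₀.ne', log_rpow two_pos, neg_mul]
  have hlog2 : 0 < log 2 := log_pos one_lt_two
  have key : ∀ q ∈ stdSimplex ℝ (Fin M), ∑ j, (negMulLog (q j) + q j * log (gibbs j)) =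
      (entropy2 q - ∑ j, ν j * q j - logSumExp2 ν) * log 2 := fun q hq => by
    simp only [hlog, entropy2_eq_sum_negMulLog, logSumExp2, logb, ← hZ, sub_mul,
      div_mul_cancel₀ _ hlog2.ne', mul_sub, mul_neg, sum_add_distrib, sum_sub_distrib,
      sum_neg_distrib, ← sum_mul, hq.2, one_mul]
    simp only [← mul_assoc, ← sum_mul, mul_comm (q _) (ν _)]
    ring
  refine ⟨⟨gibbs, hgibbs, ?_⟩, ?_⟩
  · have h := key gibbs hgibbs
    simp only [negMulLog, neg_mul, neg_add_cancel, sum_const_zero, zero_eq_mul,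
      hlog2.ne', or_false, sub_eq_zero] at h
    exact h.symm
  · rintro t ⟨q, hq, rfl⟩
    have h := (key q hq).symm.trans_le
      (sum_negMulLog_add_mul_log_le hq hgibbs fun j => by positivity)
    nlinarith

lemma logSumExp2_sub_const {ι : Type*} [Fintype ι] [Nonempty ι] (ν : ι → ℝ) (c : ℝ) :
    logSumExp2 (fun j => ν j - c) = logSumExp2 ν + c := by
  have hsplit : ∑ j, (2 : ℝ) ^ (-(ν j - c)) = 2 ^ c * ∑ j, (2 : ℝ) ^ (-ν j) := by
    rw [mul_sum]
    exact sum_congr rfl fun j _ => by rw [← rpow_add two_pos]; ring_nf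
  have hpos : 0 < ∑ j, (2 : ℝ) ^ (-ν j) := sum_pos (fun j _ => by positivity) univ_nonempty
  rw [logSumExp2, logSumExp2, hsplit, logb_mul (by positivity) hpos.ne',
    logb_rpow two_pos (by norm_num), add_comm]

lemma rpow_neg_min_le {b : ℝ} (hb : 0 < b) (x T : ℝ) :
    b ^ (-min x T) ≤ b ^ (-x) + b ^ (-T) * log b * (x - min x T) := by
  rcases le_total x T with h | h
  · simp [min_eq_left h]
  · have hexp : b ^ (-x) = b ^ (-T) * exp (log b * -(x - T)) := by
      rw [← rpow_def_of_pos hb, ← rpow_add hb]; ring_nf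
    have htangent := add_one_le_exp (log b * -(x - T))
    rw [min_eq_right h, hexp]
    nlinarith [rpow_pos_of_pos hb (-T)]

lemma Real.log_add_le_log_add {Z e : ℝ} (hZ : 1 ≤ Z) (he : 0 ≤ e) :
    log (Z + e) ≤ log Z + e := by
  have hZe : Z + e ≤ Z * exp e := by nlinarith [add_one_le_exp e]
  calc log (Z + e) ≤ log (Z * exp e) := log_le_log (by positivity) hZe
    _ = log Z + e := by rw [log_mul (by positivity) (exp_pos e).ne', log_exp]

lemma logSumExp2_min_le {ι : Type*} [Fintype ι] {ν : ι → ℝ} (h₀ : ∃ j, ν j ≤ 0) (T : ℝ) :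
    logSumExp2 (fun j => min (ν j) T) ≤
      logSumExp2 ν + (2 : ℝ) ^ (-T) * ∑ j, (ν j - min (ν j) T) := by
  obtain ⟨j₀, hj₀⟩ := h₀
  set Z := ∑ j, (2 : ℝ) ^ (-ν j)
  set D := ∑ j, (ν j - min (ν j) T)
  have hlog2 : 0 < log 2 := log_pos one_lt_two
  have hZ : 1 ≤ Z := (one_le_rpow one_le_two (neg_nonneg.2 hj₀)).trans
    (single_le_sum (f := fun j => (2 : ℝ) ^ (-ν j)) (fun j _ => by positivity) (mem_univ j₀))
  have hD : 0 ≤ D := sum_nonneg fun j _ => sub_nonneg.2 (min_le_left _ _)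
  have hsum : ∑ j, (2 : ℝ) ^ (-min (ν j) T) ≤ Z + 2 ^ (-T) * log 2 * D :=
    calc ∑ j, (2 : ℝ) ^ (-min (ν j) T)
        ≤ ∑ j, ((2 : ℝ) ^ (-ν j) + 2 ^ (-T) * log 2 * (ν j - min (ν j) T)) :=
          sum_le_sum fun j _ => rpow_neg_min_le two_pos _ _
      _ = Z + 2 ^ (-T) * log 2 * D := by rw [sum_add_distrib, ← mul_sum]
  calc logSumExp2 (fun j => min (ν j) T) ≤ log (Z + 2 ^ (-T) * log 2 * D) / log 2 :=
        logb_le_logb_of_le one_lt_two (sum_pos (fun j _ => by positivity) ⟨j₀, mem_univ _⟩) hsum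
    _ ≤ (log Z + 2 ^ (-T) * log 2 * D) / log 2 :=
        div_le_div_of_nonneg_right (log_add_le_log_add hZ (by positivity)) hlog2.le
    _ = logSumExp2 ν + (2 : ℝ) ^ (-T) * D := by
        rw [logSumExp2, logb]; field_simp; rfl

lemma csSup_add_le_csSup {A B : Set ℝ} {d : ℝ} (hA : A.Nonempty) (hB : BddAbove B)
    (h : ∀ a ∈ A, ∃ b ∈ B, a + d ≤ b) : sSup A + d ≤ sSup B := by
  rw [← le_sub_iff_add_le]
  refine csSup_le hA fun a ha => ?_
  obtain ⟨b, hb, hab⟩ := h a ha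
  exact le_sub_iff_add_le.2 (hab.trans (le_csSup hB hb))

lemma vecMul_mem_stdSimplex {ι κ : Type*} [Fintype ι] [Fintype κ] {W : Matrix ι κ ℝ}
    {p : ι → ℝ} (hW₀ : ∀ i j, 0 ≤ W i j) (hW₁ : ∀ i, ∑ j, W i j = 1)
    (hp : p ∈ stdSimplex ℝ ι) : p ᵥ* W ∈ stdSimplex ℝ κ := by
  refine ⟨fun j => sum_nonneg fun i _ => mul_nonneg (hp.1 i) (hW₀ i j), ?_⟩
  simp only [vecMul, dotProduct]
  rw [sum_comm]
  simp only [← mul_sum, hW₁, mul_one, hp.2]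

lemma le_vecMul_of_le {ι κ : Type*} [Fintype ι] {W : Matrix ι κ ℝ} {p : ι → ℝ} {γ : ℝ}
    (hW : ∀ i j, γ ≤ W i j) (hp : p ∈ stdSimplex ℝ ι) (j : κ) : γ ≤ (p ᵥ* W) j :=
  calc γ = ∑ i, p i * γ := by rw [← sum_mul, hp.2, one_mul]
    _ ≤ ∑ i, p i * W i j := sum_le_sum fun i _ => mul_le_mul_of_nonneg_left (hW i j) (hp.1 i)

lemma abs_sum_mul_le_sum_abs {ι : Type*} [Fintype ι] {p : ι → ℝ} (hp : p ∈ stdSimplex ℝ ι)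
    (a : ι → ℝ) : |∑ i, a i * p i| ≤ ∑ i, |a i| := by
  refine (abs_sum_le_sum_abs _ _).trans (sum_le_sum fun i _ => ?_)
  have hpi := mem_Icc_of_mem_stdSimplex hp i
  rw [abs_mul, abs_of_nonneg hpi.1]
  exact mul_le_of_le_one_right (abs_nonneg _) hpi.2

lemma sum_mul_add_le_sum_mul {κ : Type*} [Fintype κ] {q μ ν : κ → ℝ} {γ c : ℝ}
    (hq : q ∈ stdSimplex ℝ κ) (hγ : ∀ j, γ ≤ q j) (hle : ∀ j, μ j ≤ ν j - c) :
    ∑ j, μ j * q j + c + γ * ∑ j, (ν j - c - μ j) ≤ ∑ j, ν j * q j := by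
  have hgap : γ * ∑ j, (ν j - c - μ j) ≤ ∑ j, (ν j - c - μ j) * q j := by
    rw [mul_sum]
    exact sum_le_sum fun j _ => by
      rw [mul_comm]; exact mul_le_mul_of_nonneg_left (hγ j) (by linarith [hle j])
  have hsplit : ∑ j, (ν j - c - μ j) * q j = ∑ j, ν j * q j - c - ∑ j, μ j * q j := by
    simp only [sub_mul, sum_sub_distrib, ← mul_sum, hq.2, mul_one]
  linarith

section Primal

variable {ι κ : Type*} [Fintype ι] [Fintype κ] {W : Matrix ι κ ℝ} {s r : ι → ℝ} {S : ℝ}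

lemma bddAbove_primalValues (hW₀ : ∀ i j, 0 ≤ W i j) (hW₁ : ∀ i, ∑ j, W i j = 1)
    (lam : κ → ℝ) :
    BddAbove {t | ∃ p ∈ stdSimplex ℝ ι, (∑ i, s i * p i) = S ∧
      t = -(∑ i, r i * p i) + ∑ j, lam j * (∑ i, p i * W i j)} := by
  refine ⟨∑ i, |r i| + ∑ j, |lam j|, ?_⟩
  rintro _ ⟨p, hp, -, rfl⟩
  have hr := abs_sum_mul_le_sum_abs hp r
  have hlam : |∑ j, lam j * ∑ i, p i * W i j| ≤ ∑ j, |lam j| :=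
    abs_sum_mul_le_sum_abs (vecMul_mem_stdSimplex hW₀ hW₁ hp) lam
  linarith [neg_abs_le (∑ i, r i * p i), le_abs_self (∑ j, lam j * ∑ i, p i * W i j)]

lemma G_add_le_of_le_sub {G : (κ → ℝ) → ℝ} {γ c : ℝ} {lam lam' : κ → ℝ}
    (hW₀ : ∀ i j, 0 ≤ W i j) (hW₁ : ∀ i, ∑ j, W i j = 1) (hγ : ∀ i j, γ ≤ W i j)
    (hfeas : ∃ p ∈ stdSimplex ℝ ι, (∑ i, s i * p i) = S)
    (hG : ∀ lam, G lam = sSup {t | ∃ p ∈ stdSimplex ℝ ι, (∑ i, s i * p i) = S ∧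
      t = -(∑ i, r i * p i) + ∑ j, lam j * (∑ i, p i * W i j)})
    (hle : ∀ j, lam' j ≤ lam j - c) :
    G lam' + (c + γ * ∑ j, (lam j - c - lam' j)) ≤ G lam := by
  obtain ⟨p₀, hp₀, hp₀S⟩ := hfeas
  rw [hG, hG]
  refine csSup_add_le_csSup ⟨_, p₀, hp₀, hp₀S, rfl⟩ (bddAbove_primalValues hW₀ hW₁ lam) ?_
  rintro _ ⟨p, hp, hpS, rfl⟩
  refine ⟨_, ⟨p, hp, hpS, rfl⟩, ?_⟩
  have := sum_mul_add_le_sum_mul (vecMul_mem_stdSimplex hW₀ hW₁ hp)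
    (le_vecMul_of_le hγ hp) hle
  simp only [vecMul, dotProduct] at this
  linarith

end Primal

lemma sqrt_sum_sq_le_of_abs_le {ι : Type*} [Fintype ι] {x : ι → ℝ} {T : ℝ} (hT : 0 ≤ T)
    (hx : ∀ j, |x j| ≤ T) : √(∑ j, x j ^ 2) ≤ √(Fintype.card ι) * T := by
  rw [← sqrt_sq hT, ← sqrt_mul (Nat.cast_nonneg _)]
  refine sqrt_le_sqrt ?_
  calc ∑ j, x j ^ 2 ≤ ∑ _j : ι, T ^ 2 := sum_le_sum fun j _ => sq_le_sq.2 (by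
        rw [abs_of_nonneg hT]; exact hx j)
    _ = _ := by simp

theorem stmt10_general (N M : ℕ) (W : Matrix (Fin N) (Fin M) ℝ)
    (hWnn : ∀ i j, 0 ≤ W i j) (hWrow : ∀ i, ∑ j, W i j = 1)
    (s : Fin N → ℝ) (S : ℝ)
    (r : Fin N → ℝ)
    -- γ is the minimal entry of the channel matrix, assumed positive
    (γ : ℝ) (hγmin : IsLeast {t | ∃ i j, t = W i j} γ) (hγpos : 0 < γ)
    -- feasibility of the primal constraint set
    (hfeas : ∃ p ∈ stdSimplex ℝ (Fin N), (∑ i, s i * p i) = S)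
    (F G : (Fin M → ℝ) → ℝ)
    (hF : ∀ lam, F lam = sSup {t | ∃ q ∈ stdSimplex ℝ (Fin M),
      t = entropy2 q - ∑ j, lam j * q j})
    (hG : ∀ lam, G lam = sSup {t | ∃ p ∈ stdSimplex ℝ (Fin N),
      (∑ i, s i * p i) = S ∧
        t = -(∑ i, r i * p i) + ∑ j, lam j * (∑ i, p i * W i j)}) :
    sInf {t | ∃ lam : Fin M → ℝ, t = G lam + F lam} =
      sInf {t | ∃ lam : Fin M → ℝ,
        Real.sqrt (∑ j, (lam j) ^ 2) ≤ (M : ℝ) * max (Real.logb 2 γ⁻¹) (1 / Real.log 2) ∧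
          t = G lam + F lam} := by
  obtain ⟨i₀, j₀, -⟩ := hγmin.1
  have : Nonempty (Fin M) := ⟨j₀⟩
  have hγW : ∀ i j, γ ≤ W i j := fun i j => hγmin.2 ⟨i, j, rfl⟩
  set T := logb 2 γ⁻¹
  have hT : 0 ≤ T := logb_nonneg one_lt_two <| one_le_inv_iff₀.2
    ⟨hγpos, (hγW i₀ j₀).trans (mem_Icc_of_mem_stdSimplex ⟨hWnn i₀, hWrow i₀⟩ j₀).2⟩
  have h2T : (2 : ℝ) ^ (-T) = γ := by
    rw [rpow_neg zero_le_two, rpow_logb two_pos (by norm_num) (inv_pos.2 hγpos), inv_inv]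
  have hFeq : ∀ lam, F lam = logSumExp2 lam := fun lam =>
    (hF lam).trans (isGreatest_entropy2_sub lam).csSup_eq
  refine csInf_eq_csInf_of_forall_exists_le ?_ fun t ⟨lam, _, ht⟩ => ⟨t, ⟨lam, ht⟩, le_rfl⟩
  rintro _ ⟨lam, rfl⟩
  obtain ⟨j₁, hj₁⟩ := Finite.exists_min lam
  set lam' : Fin M → ℝ := fun j => min (lam j - lam j₁) T
  have hlam' : ∀ j, |lam' j| ≤ T := fun j =>
    abs_le.2 ⟨by linarith [le_min (sub_nonneg.2 (hj₁ j)) hT], min_le_right _ _⟩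
  have hball : √(∑ j, lam' j ^ 2) ≤ M * max T (1 / log 2) :=
    calc √(∑ j, lam' j ^ 2) ≤ √M * T := by simpa using sqrt_sum_sq_le_of_abs_le hT hlam'
      _ ≤ M * max T (1 / log 2) := mul_le_mul (sqrt_le_self_iff.2 (.inr
          (Nat.one_le_cast.2 j₀.pos))) (le_max_left _ _) hT (Nat.cast_nonneg _)
  refine ⟨G lam' + F lam', ⟨lam', hball, rfl⟩, ?_⟩
  have hGle := G_add_le_of_le_sub hWnn hWrow hγW hfeas hG (lam' := lam') (c := lam j₁)
    fun j => min_le_left _ _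
  have hFle := logSumExp2_min_le (ν := fun j => lam j - lam j₁) ⟨j₁, by simp⟩ T
  rw [logSumExp2_sub_const, h2T] at hFle
  rw [hFeq, hFeq]
  linarith

theorem stmt10 (N M : ℕ) (W : Matrix (Fin N) (Fin M) ℝ)
    (hWnn : ∀ i j, 0 ≤ W i j) (hWrow : ∀ i, ∑ j, W i j = 1)
    (s : Fin N → ℝ) (hs : ∀ i, 0 ≤ s i) (S : ℝ) (hS : 0 ≤ S)
    (r : Fin N → ℝ) (hr : ∀ i, r i = -(∑ j, W i j * Real.logb 2 (W i j)))
    -- γ is the minimal entry of the channel matrix, assumed positive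
    (γ : ℝ) (hγmin : IsLeast {t | ∃ i j, t = W i j} γ) (hγpos : 0 < γ)
    -- feasibility of the primal constraint set
    (hfeas : ∃ p ∈ stdSimplex ℝ (Fin N), (∑ i, s i * p i) = S)
    (F G : (Fin M → ℝ) → ℝ)
    (hF : ∀ lam, F lam = sSup {t | ∃ q ∈ stdSimplex ℝ (Fin M),
      t = entropy2 q - ∑ j, lam j * q j})
    (hG : ∀ lam, G lam = sSup {t | ∃ p ∈ stdSimplex ℝ (Fin N),
      (∑ i, s i * p i) = S ∧
        t = -(∑ i, r i * p i) + ∑ j, lam j * (∑ i, p i * W i j)}) :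
    sInf {t | ∃ lam : Fin M → ℝ, t = G lam + F lam} =
      sInf {t | ∃ lam : Fin M → ℝ,
        Real.sqrt (∑ j, (lam j) ^ 2) ≤ (M : ℝ) * max (Real.logb 2 γ⁻¹) (1 / Real.log 2) ∧
          t = G lam + F lam} :=
  stmt10_general N M W hWnn hWrow s S r γ hγmin hγpos hfeas F G hF hG
end
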